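/- arXiv:1809.04831 — 4 statements merged into one kernel-verified Lean document; each statement's English description precedes it below -/
import Mathlib

section
/- Let X ⊆ ℝ^n be Clarke regular, let g be a continuous metric on X, and let f : X → ℝ^n be a continuous vector field. Then for every x₀ ∈ X, a function x : [0,T) → X is a Carathéodory solution of ẋ ∈ Π^g_X f(x), x(0)=x₀, if and only if it is a Krasovskii solution. -/
open MeasureTheory Filter Topology Set
open scoped RealInnerProductSpace

/-- Euclidean space ℝ^n. -/
abbrev Euc (n : ℕ) := EuclideanSpace ℝ (Fin n)

variable {n : ℕ}

/-- The tangent (contingent) cone of `X` at `x`. -/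
def tanCone (X : Set (Euc n)) (x : Euc n) : Set (Euc n) :=
  {v | ∃ (xk : ℕ → Euc n) (δ : ℕ → ℝ),
    (∀ k, xk k ∈ X) ∧ Tendsto xk atTop (𝓝 x) ∧
    (∀ k, 0 < δ k) ∧ Tendsto δ atTop (𝓝 0) ∧
    Tendsto (fun k => (δ k)⁻¹ • (xk k - x)) atTop (𝓝 v)}

/-- The Clarke tangent cone of `X` at `x` (inner limit of tangent cones). -/
def clarkeCone (X : Set (Euc n)) (x : Euc n) : Set (Euc n) :=
  {v | ∀ yk : ℕ → Euc n, (∀ k, yk k ∈ X) → Tendsto yk atTop (𝓝 x) →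
    ∃ vk : ℕ → Euc n, (∀ k, vk k ∈ tanCone X (yk k)) ∧ Tendsto vk atTop (𝓝 v)}

/-- A set is locally compact if it is the intersection of a closed and an open set. -/
def LocCompactSet (X : Set (Euc n)) : Prop :=
  ∃ C U : Set (Euc n), IsClosed C ∧ IsOpen U ∧ X = C ∩ U

/-- `X` is Clarke regular: locally compact and tangent cone equals Clarke tangent cone. -/
def ClarkeRegular (X : Set (Euc n)) : Prop :=
  LocCompactSet X ∧ ∀ x ∈ X, tanCone X x = clarkeCone X x

/-- A (Riemannian) metric: an inner product `B x` on ℝ^n for every point `x`. -/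
structure VarMetric (n : ℕ) where
  B : Euc n → Euc n →L[ℝ] Euc n →L[ℝ] ℝ
  symm : ∀ x v w, B x v w = B x w v
  posdef : ∀ x v, v ≠ 0 → 0 < B x v v

namespace VarMetric

/-- The norm induced by the metric at `x`. -/
noncomputable def gnorm (g : VarMetric n) (x v : Euc n) : ℝ := Real.sqrt (g.B x v v)

/-- Maximum eigenvalue (max of the `g`-norm over the Euclidean unit sphere). -/
noncomputable def maxEig (g : VarMetric n) (x : Euc n) : ℝ :=
  sSup {r | ∃ v : Euc n, ‖v‖ = 1 ∧ r = g.gnorm x v}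

/-- Minimum eigenvalue (min of the `g`-norm over the Euclidean unit sphere). -/
noncomputable def minEig (g : VarMetric n) (x : Euc n) : ℝ :=
  sInf {r | ∃ v : Euc n, ‖v‖ = 1 ∧ r = g.gnorm x v}

/-- Condition number of the metric at `x`. -/
noncomputable def cond (g : VarMetric n) (x : Euc n) : ℝ := g.maxEig x / g.minEig x

end VarMetric

/-- The projected vector field: `g`-closest points to `f x` in the tangent cone. -/
noncomputable def projVF (X : Set (Euc n)) (g : VarMetric n) (f : Euc n → Euc n)
    (x : Euc n) : Set (Euc n) :=
  {v | v ∈ tanCone X x ∧ ∀ w ∈ tanCone X x, g.gnorm x (v - f x) ≤ g.gnorm x (w - f x)}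

/-- Krasovskii regularization of a set-valued map `F` on `X`. -/
def kras (X : Set (Euc n)) (F : Euc n → Set (Euc n)) (x : Euc n) : Set (Euc n) :=
  closure (convexHull ℝ {v | ∃ (xk : ℕ → Euc n) (vk : ℕ → Euc n),
    (∀ k, xk k ∈ X) ∧ Tendsto xk atTop (𝓝 x) ∧
    (∀ k, vk k ∈ F (xk k)) ∧ Tendsto vk atTop (𝓝 v)})

/-- Carathéodory solution of `ẋ ∈ F(x)`, `x 0 = x₀`, on the interval `I`
(`I = Set.Ico 0 T`, or `Set.Ici 0` for complete solutions). -/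
def IsSolOn (X : Set (Euc n)) (F : Euc n → Set (Euc n)) (x₀ : Euc n)
    (x : ℝ → Euc n) (I : Set ℝ) : Prop :=
  x 0 = x₀ ∧ (∀ t ∈ I, x t ∈ X) ∧
  ∃ v : ℝ → Euc n, LocallyIntegrableOn v I volume ∧
    (∀ t ∈ I, x t = x₀ + ∫ s in (0:ℝ)..t, v s) ∧
    (∀ᵐ t ∂(volume.restrict I), v t ∈ F (x t))

/-- The normal cone of `X` at `x` with respect to the metric `g` (polar of the Clarke cone). -/
def normalCone (X : Set (Euc n)) (g : VarMetric n) (x : Euc n) : Set (Euc n) :=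
  {η | ∀ v ∈ clarkeCone X x, g.B x v η ≤ 0}


lemma B_nonneg (g : VarMetric n) (x v : Euc n) : 0 ≤ g.B x v v := by
  rcases eq_or_ne v 0 with h | h
  · simp [h]
  · exact (g.posdef x v h).le

lemma B_expand (g : VarMetric n) (x a b : Euc n) (t : ℝ) :
    g.B x (a + t • b) (a + t • b)
      = g.B x a a + 2 * t * g.B x a b + t ^ 2 * g.B x b b := by
  have e1 : g.B x (a + t • b) = g.B x a + t • g.B x b := by
    rw [map_add, (g.B x).map_smul]
  rw [e1]
  simp only [ContinuousLinearMap.add_apply, ContinuousLinearMap.smul_apply,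
    map_add, (g.B x a).map_smul, (g.B x b).map_smul, smul_eq_mul, g.symm x b a]
  ring

lemma B_CS (g : VarMetric n) (x a b : Euc n) :
    g.B x a b ≤ g.gnorm x a * g.gnorm x b := by
  have hp := B_nonneg g x a
  have hr := B_nonneg g x b
  set p := g.B x a a with hpd
  set q := g.B x a b with hqd
  set r := g.B x b b with hrd
  have key : ∀ t : ℝ, 0 ≤ p + 2 * t * q + t ^ 2 * r := by
    intro t
    have := B_nonneg g x (a + t • b)
    rwa [B_expand] at this
  rcases eq_or_lt_of_le hr with hr0 | hrpos
  · have hq : q ≤ 0 := by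
      by_contra hq
      push_neg at hq
      have hk := key (-(p + 1) / (2 * q))
      rw [← hr0] at hk
      have he : 2 * (-(p + 1) / (2 * q)) * q = -(p + 1) := by
        field_simp
      rw [he] at hk
      nlinarith
    have : g.gnorm x b = 0 := by
      rw [VarMetric.gnorm, ← hrd, ← hr0, Real.sqrt_zero]
    rw [this, mul_zero]
    exact hq
  · have := key (-q / r)
    have hq2 : q ^ 2 ≤ p * r := by
      have h1 : p + 2 * (-q / r) * q + (-q / r) ^ 2 * r = p - q ^ 2 / r := by
        field_simp
        ring
      rw [h1] at this
      have := (div_le_iff₀ hrpos).1 (by linarith : q ^ 2 / r ≤ p)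
      linarith
    calc q ≤ |q| := le_abs_self q
      _ = Real.sqrt (q ^ 2) := (Real.sqrt_sq_eq_abs q).symm
      _ ≤ Real.sqrt (p * r) := Real.sqrt_le_sqrt hq2
      _ = Real.sqrt p * Real.sqrt r := Real.sqrt_mul hp r

lemma gnorm_nonneg (g : VarMetric n) (x v : Euc n) : 0 ≤ g.gnorm x v := Real.sqrt_nonneg _

lemma gnorm_add_le (g : VarMetric n) (x a b : Euc n) :
    g.gnorm x (a + b) ≤ g.gnorm x a + g.gnorm x b := by
  have hexp : g.B x (a + b) (a + b)
      = g.B x a a + 2 * g.B x a b + g.B x b b := by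
    have := B_expand g x a b 1
    simpa using this
  have hcs := B_CS g x a b
  have h1 : g.B x (a + b) (a + b) ≤ (g.gnorm x a + g.gnorm x b) ^ 2 := by
    have ha : g.gnorm x a ^ 2 = g.B x a a := Real.sq_sqrt (B_nonneg g x a)
    have hb : g.gnorm x b ^ 2 = g.B x b b := Real.sq_sqrt (B_nonneg g x b)
    nlinarith
  calc g.gnorm x (a + b) = Real.sqrt (g.B x (a + b) (a + b)) := rfl
    _ ≤ Real.sqrt ((g.gnorm x a + g.gnorm x b) ^ 2) := Real.sqrt_le_sqrt h1
    _ = g.gnorm x a + g.gnorm x b := by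
        rw [Real.sqrt_sq (by have := gnorm_nonneg g x a; have := gnorm_nonneg g x b; linarith)]

lemma gnorm_smul (g : VarMetric n) (x : Euc n) (c : ℝ) (a : Euc n) :
    g.gnorm x (c • a) = |c| * g.gnorm x a := by
  have : g.B x (c • a) (c • a) = c ^ 2 * g.B x a a := by
    rw [(g.B x).map_smul]
    simp only [ContinuousLinearMap.smul_apply, (g.B x a).map_smul, smul_eq_mul]
    ring
  rw [VarMetric.gnorm, this, Real.sqrt_mul (by positivity), Real.sqrt_sq_eq_abs,
    VarMetric.gnorm]

lemma tendsto_gnorm_seq {n : ℕ} (X : Set (Euc n)) (g : VarMetric n) (f : Euc n → Euc n)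
    (hg : ContinuousOn g.B X) (hf : ContinuousOn f X) {x : Euc n} (hx : x ∈ X)
    {xk uk : ℕ → Euc n} {u : Euc n} (hXk : ∀ k, xk k ∈ X)
    (hxk : Tendsto xk atTop (𝓝 x)) (huk : Tendsto uk atTop (𝓝 u)) :
    Tendsto (fun k => g.gnorm (xk k) (uk k - f (xk k))) atTop
      (𝓝 (g.gnorm x (u - f x))) := by
  have hx' : Tendsto xk atTop (𝓝[X] x) :=
    tendsto_nhdsWithin_of_tendsto_nhds_of_eventually_within _ hxk
      (Eventually.of_forall hXk)
  have hBk : Tendsto (fun k => g.B (xk k)) atTop (𝓝 (g.B x)) := (hg x hx).tendsto.comp hx'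
  have hfk : Tendsto (fun k => f (xk k)) atTop (𝓝 (f x)) := (hf x hx).tendsto.comp hx'
  have hu : Tendsto (fun k => uk k - f (xk k)) atTop (𝓝 (u - f x)) := huk.sub hfk
  have h1 : Tendsto (fun k => g.B (xk k) (uk k - f (xk k))) atTop
      (𝓝 (g.B x (u - f x))) :=
    ((isBoundedBilinearMap_apply (𝕜 := ℝ)).continuous.tendsto _).comp (hBk.prodMk_nhds hu)
  have h2 : Tendsto (fun k => g.B (xk k) (uk k - f (xk k)) (uk k - f (xk k))) atTop
      (𝓝 (g.B x (u - f x) (u - f x))) :=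
    ((isBoundedBilinearMap_apply (𝕜 := ℝ)).continuous.tendsto _).comp (h1.prodMk_nhds hu)
  exact (Real.continuous_sqrt.tendsto _).comp h2

lemma kras_subset_ineq {n : ℕ} (X : Set (Euc n)) (g : VarMetric n) (f : Euc n → Euc n)
    (hX : ClarkeRegular X) (hg : ContinuousOn g.B X) (hf : ContinuousOn f X)
    {x : Euc n} (hx : x ∈ X) :
    kras X (projVF X g f) x ⊆
      {v | ∀ w ∈ tanCone X x, g.gnorm x (v - f x) ≤ g.gnorm x (w - f x)} := by
  set C : Set (Euc n) :=
    {v | ∀ w ∈ tanCone X x, g.gnorm x (v - f x) ≤ g.gnorm x (w - f x)} with hC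
  have hclosed : IsClosed C := by
    have : C = ⋂ w ∈ tanCone X x,
        {v : Euc n | g.gnorm x (v - f x) ≤ g.gnorm x (w - f x)} := by
      ext v; simp [hC]
    rw [this]
    refine isClosed_biInter fun w _ => isClosed_le ?_ continuous_const
    have hB2 : Continuous fun v : Euc n => g.B x (v - f x) (v - f x) := by
      have hs : Continuous fun v : Euc n => v - f x :=
        continuous_id.sub continuous_const
      exact ((isBoundedBilinearMap_apply (𝕜 := ℝ)).continuous.comp
        ((((g.B x).continuous.comp hs).prodMk hs))).congr fun v => rfl
    exact Real.continuous_sqrt.comp hB2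
  have hconv : Convex ℝ C := by
    intro v₁ hv₁ v₂ hv₂ a b ha hb hab
    intro w hw
    have h1 := hv₁ w hw
    have h2 := hv₂ w hw
    have hsplit : a • v₁ + b • v₂ - f x = a • (v₁ - f x) + b • (v₂ - f x) := by
      have hfx : a • f x + b • f x = f x := by rw [← add_smul, hab, one_smul]
      rw [smul_sub, smul_sub]
      conv_lhs => rw [← hfx]
      abel
    calc g.gnorm x (a • v₁ + b • v₂ - f x)
        = g.gnorm x (a • (v₁ - f x) + b • (v₂ - f x)) := by rw [hsplit]
      _ ≤ g.gnorm x (a • (v₁ - f x)) + g.gnorm x (b • (v₂ - f x)) := gnorm_add_le _ _ _ _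
      _ = a * g.gnorm x (v₁ - f x) + b * g.gnorm x (v₂ - f x) := by
          rw [gnorm_smul, gnorm_smul, abs_of_nonneg ha, abs_of_nonneg hb]
      _ ≤ a * g.gnorm x (w - f x) + b * g.gnorm x (w - f x) := by
          have := gnorm_nonneg g x (w - f x)
          gcongr
      _ = g.gnorm x (w - f x) := by rw [← add_mul, hab, one_mul]
  have hS : {v : Euc n | ∃ (xk : ℕ → Euc n) (vk : ℕ → Euc n),
      (∀ k, xk k ∈ X) ∧ Tendsto xk atTop (𝓝 x) ∧
      (∀ k, vk k ∈ projVF X g f (xk k)) ∧ Tendsto vk atTop (𝓝 v)} ⊆ C := by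
    rintro v ⟨xk, vk, hXk, hxk, hvk, hvlim⟩ w hw
    have hw' : w ∈ clarkeCone X x := (hX.2 x hx) ▸ hw
    obtain ⟨wk, hwk, hwlim⟩ := hw' xk hXk hxk
    have hineq : ∀ k, g.gnorm (xk k) (vk k - f (xk k)) ≤
        g.gnorm (xk k) (wk k - f (xk k)) := fun k => (hvk k).2 (wk k) (hwk k)
    exact le_of_tendsto_of_tendsto'
      (tendsto_gnorm_seq X g f hg hf hx hXk hxk hvlim)
      (tendsto_gnorm_seq X g f hg hf hx hXk hxk hwlim) hineq
  exact closure_minimal (convexHull_min hS hconv) hclosed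

lemma subset_kras {n : ℕ} (X : Set (Euc n)) (F : Euc n → Set (Euc n)) {y : Euc n}
    (hy : y ∈ X) : F y ⊆ kras X F y := by
  intro v hv
  refine subset_closure (subset_convexHull ℝ _ ?_)
  exact ⟨fun _ => y, fun _ => v, fun _ => hy, tendsto_const_nhds, fun _ => hv,
    tendsto_const_nhds⟩

lemma ae_tangent {n : ℕ} (X : Set (Euc n)) {T : ℝ} {x₀ : Euc n} {x v : ℝ → Euc n}
    (hmem : ∀ t ∈ Set.Ico 0 T, x t ∈ X)
    (hloc : LocallyIntegrableOn v (Set.Ico 0 T) volume)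
    (hint : ∀ t ∈ Set.Ico 0 T, x t = x₀ + ∫ s in (0:ℝ)..t, v s) :
    ∀ᵐ t ∂(volume.restrict (Set.Ico 0 T)), v t ∈ tanCone X (x t) := by
  rw [ae_restrict_iff' measurableSet_Ico]
  have main : ∀ b : ℝ, b < T → ∀ᵐ t ∂(volume : Measure ℝ),
      t ∈ Set.Ico 0 b → v t ∈ tanCone X (x t) := by
    intro b hbT
    have hIccsub : Set.Icc 0 b ⊆ Set.Ico 0 T := fun s hs =>
      ⟨hs.1, lt_of_le_of_lt hs.2 hbT⟩
    have hvint : IntegrableOn v (Set.Icc 0 b) volume :=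
      hloc.integrableOn_compact_subset hIccsub isCompact_Icc
    set vb : ℝ → Euc n := (Set.Icc 0 b).indicator v with hvb
    have hwint : Integrable vb volume := (integrable_indicator_iff measurableSet_Icc).2 hvint
    have hleb := IsUnifLocDoublingMeasure.ae_tendsto_average_norm_sub (volume : Measure ℝ)
      hwint.locallyIntegrable 1
    filter_upwards [hleb] with t ht htmem
    have htb : t < b := htmem.2
    have ht0 : 0 ≤ t := htmem.1
    have hbtpos : 0 < b - t := sub_pos.2 htb
    set δ : ℕ → ℝ := fun k => (b - t) / (k + 1) with hδ
    have hδpos : ∀ k : ℕ, 0 < δ k := fun k => div_pos hbtpos (by positivity)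
    have hδle : ∀ k : ℕ, δ k ≤ b - t := fun k =>
      div_le_self hbtpos.le (le_add_of_nonneg_left (Nat.cast_nonneg k))
    have htdb : ∀ k : ℕ, t + δ k ≤ b := fun k => by have := hδle k; linarith
    have htdT : ∀ k : ℕ, t + δ k ∈ Set.Ico 0 T := fun k =>
      ⟨by have := (hδpos k).le; linarith, lt_of_le_of_lt (htdb k) hbT⟩
    have hδ0 : Tendsto δ atTop (𝓝 0) := by
      have he : δ = fun k : ℕ => (b - t) * (1 / (k + 1)) := by
        funext k; rw [hδ]; ring
      rw [he]
      simpa using tendsto_one_div_add_atTop_nhds_zero_nat.const_mul (b - t)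
    have htI : t ∈ Set.Icc 0 b := ⟨ht0, htb.le⟩
    have hvbt : vb t = v t := indicator_of_mem htI v
    -- interval integral representation
    have hIk : ∀ k : ℕ, x (t + δ k) - x t = ∫ s in t..(t + δ k), v s := by
      intro k
      have i1 : IntervalIntegrable v volume 0 (t + δ k) := by
        refine (hvint.mono_set ?_).intervalIntegrable
        rw [Set.uIcc_of_le (by have := (hδpos k).le; linarith)]
        exact Set.Icc_subset_Icc le_rfl (htdb k)
      have i2 : IntervalIntegrable v volume 0 t := by
        refine (hvint.mono_set ?_).intervalIntegrable
        rw [Set.uIcc_of_le ht0]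
        exact Set.Icc_subset_Icc le_rfl htb.le
      rw [hint _ (htdT k), hint _ ⟨ht0, lt_trans htb hbT⟩, add_sub_add_left_eq_sub,
        intervalIntegral.integral_interval_sub_left i1 i2]
    have hivk : ∀ k : ℕ, IntervalIntegrable v volume t (t + δ k) := by
      intro k
      refine (hvint.mono_set ?_).intervalIntegrable
      rw [Set.uIcc_of_le (by have := (hδpos k).le; linarith)]
      exact Set.Icc_subset_Icc ht0 (htdb k)
    -- the bound
    have hbound : ∀ k : ℕ, ‖(δ k)⁻¹ • (x (t + δ k) - x t) - v t‖
        ≤ 2 * ⨍ y in Metric.closedBall t (δ k), ‖vb y - vb t‖ := by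
      intro k
      set d := δ k with hd
      have hdpos : 0 < d := hδpos k
      have hsub : (δ k)⁻¹ • (x (t + δ k) - x t) - v t
          = d⁻¹ • ∫ s in t..(t + d), (v s - v t) := by
        rw [hIk k, intervalIntegral.integral_sub (hivk k) intervalIntegrable_const,
          intervalIntegral.integral_const, smul_sub, add_sub_cancel_left, smul_smul,
          inv_mul_cancel₀ hdpos.ne', one_smul]
      have h1 : ‖(δ k)⁻¹ • (x (t + δ k) - x t) - v t‖
          ≤ d⁻¹ * ∫ s in Set.Ioc t (t + d), ‖v s - v t‖ := by
        rw [hsub, norm_smul, Real.norm_eq_abs, abs_of_pos (inv_pos.2 hdpos)]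
        gcongr
        calc ‖∫ s in t..(t + d), (v s - v t)‖
            ≤ ∫ s in t..(t + d), ‖v s - v t‖ :=
              intervalIntegral.norm_integral_le_integral_norm (by linarith)
          _ = ∫ s in Set.Ioc t (t + d), ‖v s - v t‖ :=
              intervalIntegral.integral_of_le (by linarith)
      have h2 : ∫ s in Set.Ioc t (t + d), ‖v s - v t‖
          = ∫ s in Set.Ioc t (t + d), ‖vb s - vb t‖ := by
        refine setIntegral_congr_fun measurableSet_Ioc fun s hs => ?_
        have hsI : s ∈ Set.Icc 0 b := ⟨le_trans ht0 hs.1.le, le_trans hs.2 (htdb k)⟩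
        simp only [hvb]
        rw [indicator_of_mem hsI, indicator_of_mem htI]
      have h3 : ∫ s in Set.Ioc t (t + d), ‖vb s - vb t‖
          ≤ ∫ s in Metric.closedBall t d, ‖vb s - vb t‖ := by
        have hintcb : IntegrableOn (fun s => ‖vb s - vb t‖) (Metric.closedBall t d) volume :=
          (hwint.integrableOn.sub (integrableOn_const
            (measure_closedBall_lt_top).ne)).norm
        refine setIntegral_mono_set hintcb
          (Eventually.of_forall fun s => norm_nonneg _)
          (HasSubset.Subset.eventuallyLE fun s hs => ?_)
        rw [Real.closedBall_eq_Icc]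
        exact ⟨by have := hs.1; linarith, hs.2⟩
      have havg : ∫ y in Metric.closedBall t d, ‖vb y - vb t‖
          = (2 * d) * ⨍ y in Metric.closedBall t d, ‖vb y - vb t‖ := by
        rw [setAverage_eq, measureReal_def, Real.volume_closedBall,
          ENNReal.toReal_ofReal (by positivity), smul_eq_mul, ← mul_assoc,
          mul_inv_cancel₀ (by positivity), one_mul]
      calc ‖(δ k)⁻¹ • (x (t + δ k) - x t) - v t‖
          ≤ d⁻¹ * ∫ s in Set.Ioc t (t + d), ‖v s - v t‖ := h1
        _ ≤ d⁻¹ * ∫ s in Metric.closedBall t d, ‖vb s - vb t‖ := by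
            rw [h2]; exact mul_le_mul_of_nonneg_left h3 (inv_pos.2 hdpos).le
        _ = 2 * ⨍ y in Metric.closedBall t d, ‖vb y - vb t‖ := by
            have hdne : d ≠ 0 := hdpos.ne'
            rw [havg, ← mul_assoc, show d⁻¹ * (2 * d) = 2 by field_simp]
    -- limit of averages is zero
    have hδin : Tendsto δ atTop (𝓝[>] (0:ℝ)) :=
      tendsto_nhdsWithin_of_tendsto_nhds_of_eventually_within _ hδ0
        (Eventually.of_forall fun k => hδpos k)
    have havg0 : Tendsto (fun k => ⨍ y in Metric.closedBall t (δ k), ‖vb y - vb t‖)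
        atTop (𝓝 0) :=
      ht (fun _ => t) δ hδin (Eventually.of_forall fun k =>
        Metric.mem_closedBall_self (by have := (hδpos k).le; linarith))
    have hlim0 : Tendsto (fun k => (δ k)⁻¹ • (x (t + δ k) - x t) - v t) atTop (𝓝 0) :=
      squeeze_zero_norm hbound (by simpa using havg0.const_mul 2)
    have hlim : Tendsto (fun k => (δ k)⁻¹ • (x (t + δ k) - x t)) atTop (𝓝 (v t)) :=
      tendsto_sub_nhds_zero_iff.1 hlim0
    have hxk : Tendsto (fun k => x (t + δ k)) atTop (𝓝 (x t)) := by
      rw [← tendsto_sub_nhds_zero_iff]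
      have he : (fun k => x (t + δ k) - x t)
          = fun k => δ k • ((δ k)⁻¹ • (x (t + δ k) - x t)) := by
        funext k
        rw [smul_smul, mul_inv_cancel₀ (hδpos k).ne', one_smul]
      rw [he]
      simpa using hδ0.smul hlim
    exact ⟨fun k => x (t + δ k), δ, fun k => hmem _ (htdT k), hxk, hδpos, hδ0, hlim⟩
  have hseq : ∀ m : ℕ, ∀ᵐ t ∂(volume : Measure ℝ),
      t ∈ Set.Ico 0 (T - 1 / (m + 1)) → v t ∈ tanCone X (x t) := fun m =>
    main _ (by
      have h : (0:ℝ) < 1 / (m + 1) := by positivity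
      linarith)
  filter_upwards [ae_all_iff.2 hseq] with t ht htI
  obtain ⟨m, hm⟩ := exists_nat_one_div_lt (sub_pos.2 htI.2)
  exact ht m ⟨htI.1, by have : (1:ℝ)/(m+1) < T - t := hm; linarith⟩

/-- equivalence of Carathéodory and Krasovskii solutions under
Clarke regularity and continuity (Theorem 6.3). -/
theorem stmt_9 {n : ℕ} (X : Set (Euc n)) (g : VarMetric n) (f : Euc n → Euc n)
    (hX : ClarkeRegular X) (hg : ContinuousOn g.B X) (hf : ContinuousOn f X) :
    ∀ x₀ ∈ X, ∀ T > (0:ℝ), ∀ x : ℝ → Euc n,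
      (IsSolOn X (projVF X g f) x₀ x (Set.Ico 0 T) ↔
       IsSolOn X (kras X (projVF X g f)) x₀ x (Set.Ico 0 T)) := by
  intro x₀ hx₀ T hT x
  constructor
  · rintro ⟨h0, hmem, v, hloc, hint, hae⟩
    refine ⟨h0, hmem, v, hloc, hint, ?_⟩
    filter_upwards [hae, ae_restrict_mem measurableSet_Ico] with t hv htI
    exact subset_kras X _ (hmem t htI) hv
  · rintro ⟨h0, hmem, v, hloc, hint, hae⟩
    refine ⟨h0, hmem, v, hloc, hint, ?_⟩
    have htan := ae_tangent X hmem hloc hint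
    filter_upwards [hae, htan, ae_restrict_mem measurableSet_Ico] with t hv htn htI
    exact ⟨htn, fun w hw => kras_subset_ineq X g f hX hg hf (hmem t htI) hv w hw⟩
end

section
/- Let X ⊆ ℝ^n be Clarke regular and let g and g' be continuous metrics on X. If X is prox-regular with respect to g, then X is prox-regular with respect to g'. -/
open MeasureTheory Filter Topology Set
open scoped RealInnerProductSpace

variable {n : ℕ}

/-- `X` is prox-regular at `x` with respect to the metric `g`. -/
def ProxRegAt {n : ℕ} (X : Set (Euc n)) (g : VarMetric n) (x : Euc n) : Prop :=
  ∃ L > (0:ℝ), ∃ W ∈ 𝓝 x, ∀ y ∈ X ∩ W, ∀ z ∈ X ∩ W, ∀ η ∈ normalCone X g y,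
    g.B y η (z - y) ≤ L * g.gnorm y η * (g.gnorm y (z - y)) ^ 2

/-- `X` is prox-regular with respect to the metric `g`. -/
def ProxReg {n : ℕ} (X : Set (Euc n)) (g : VarMetric n) : Prop :=
  ∀ x ∈ X, ProxRegAt X g x


section ProxHelpers

lemma bilin_nonneg (B : Euc n →L[ℝ] Euc n →L[ℝ] ℝ)
    (h : ∀ v, v ≠ 0 → 0 < B v v) (v : Euc n) : 0 ≤ B v v := by
  rcases eq_or_ne v 0 with rfl | hv
  · simp
  · exact (h v hv).le

lemma bilin_cs (B : Euc n →L[ℝ] Euc n →L[ℝ] ℝ) (hsymm : ∀ v w, B v w = B w v)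
    (h : ∀ v, v ≠ 0 → 0 < B v v) (v w : Euc n) :
    B v w ≤ Real.sqrt (B v v) * Real.sqrt (B w w) := by
  have key : (B v w)^2 ≤ (B v v) * (B w w) := by
    have h4 : discrim (B w w) (2 * B v w) (B v v) ≤ 0 := by
      apply discrim_le_zero
      intro t
      have hnn := bilin_nonneg B h (v + t • w)
      have expand : B (v + t • w) (v + t • w)
          = B w w * t^2 + 2 * B v w * t + B v v := by
        simp [map_add, _root_.map_smul, ContinuousLinearMap.add_apply,
          ContinuousLinearMap.smul_apply, smul_eq_mul]
        rw [hsymm w v]; ring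
      linarith [expand ▸ hnn]
    unfold discrim at h4
    nlinarith
  calc B v w ≤ |B v w| := le_abs_self _
    _ = Real.sqrt ((B v w)^2) := (Real.sqrt_sq_eq_abs _).symm
    _ ≤ Real.sqrt ((B v v) * (B w w)) := Real.sqrt_le_sqrt key
    _ = _ := Real.sqrt_mul (bilin_nonneg B h v) _

lemma exists_lower (B : Euc n →L[ℝ] Euc n →L[ℝ] ℝ)
    (h : ∀ v, v ≠ 0 → 0 < B v v) : ∃ m > 0, ∀ v : Euc n, m * ‖v‖^2 ≤ B v v := by
  by_cases hS : (Metric.sphere (0:Euc n) 1).Nonempty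
  · have hc : IsCompact (Metric.sphere (0:Euc n) 1) := isCompact_sphere 0 1
    have hcont : ContinuousOn (fun v : Euc n => B v v) (Metric.sphere (0:Euc n) 1) :=
      (B.continuous.clm_apply continuous_id).continuousOn
    obtain ⟨v₀, hv₀, hmin⟩ := hc.exists_isMinOn hS hcont
    have hv₀1 : ‖v₀‖ = 1 := mem_sphere_zero_iff_norm.mp hv₀
    have hv₀0 : v₀ ≠ 0 := by intro h0; rw [h0] at hv₀1; simp at hv₀1
    refine ⟨B v₀ v₀, h v₀ hv₀0, fun v => ?_⟩
    rcases eq_or_ne v 0 with rfl | hv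
    · simp
    · have hvn : 0 < ‖v‖ := norm_pos_iff.mpr hv
      set u : Euc n := ‖v‖⁻¹ • v with hu
      have hun : ‖u‖ = 1 := by
        rw [hu, norm_smul]; simp [abs_of_nonneg (inv_nonneg.mpr hvn.le), inv_mul_cancel₀ hvn.ne']
      have hmem : u ∈ Metric.sphere (0:Euc n) 1 := mem_sphere_zero_iff_norm.mpr hun
      have := hmin hmem
      have hBu : B u u = ‖v‖⁻¹ * (‖v‖⁻¹ * B v v) := by
        rw [hu]; simp [_root_.map_smul, ContinuousLinearMap.smul_apply, smul_eq_mul]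
      have h2 : B v₀ v₀ ≤ ‖v‖⁻¹ * (‖v‖⁻¹ * B v v) := hBu ▸ this
      have h3 : 0 < ‖v‖^2 := by positivity
      calc B v₀ v₀ * ‖v‖^2 ≤ (‖v‖⁻¹ * (‖v‖⁻¹ * B v v)) * ‖v‖^2 := by nlinarith
        _ = B v v := by
          rw [pow_two]
          field_simp
  · refine ⟨1, one_pos, fun v => ?_⟩
    rcases eq_or_ne v 0 with rfl | hv
    · simp
    · exfalso; apply hS
      have hvn : 0 < ‖v‖ := norm_pos_iff.mpr hv
      exact ⟨‖v‖⁻¹ • v, mem_sphere_zero_iff_norm.mpr (by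
        rw [norm_smul]; simp [abs_of_nonneg (inv_nonneg.mpr hvn.le), inv_mul_cancel₀ hvn.ne'])⟩

lemma exists_rep (B B' : Euc n →L[ℝ] Euc n →L[ℝ] ℝ)
    (h : ∀ v, v ≠ 0 → 0 < B v v) (η : Euc n) :
    ∃ η', ∀ v, B η' v = B' η v := by
  set S : Euc n →ₗ[ℝ] Euc n :=
    { toFun := fun w => (InnerProductSpace.toDual ℝ (Euc n)).symm (B w)
      map_add' := by intro a b; simp [map_add]
      map_smul' := by intro c a; simp [_root_.map_smul] }
  have hSapp : ∀ w v : Euc n, inner (𝕜 := ℝ) (S w) v = B w v := by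
    intro w v
    simp only [S, LinearMap.coe_mk, AddHom.coe_mk]
    exact InnerProductSpace.toDual_symm_apply
  have hinj : Function.Injective S := by
    rw [injective_iff_map_eq_zero]
    intro w hw
    by_contra hw0
    have h0 : inner (𝕜 := ℝ) (S w) w = (0:ℝ) := by rw [hw]; simp
    rw [hSapp] at h0
    exact absurd h0 (h w hw0).ne'
  have hsurj := LinearMap.injective_iff_surjective.mp hinj
  obtain ⟨η', hη'⟩ := hsurj ((InnerProductSpace.toDual ℝ (Euc n)).symm (B' η))
  refine ⟨η', fun v => ?_⟩
  have h1 : inner (𝕜 := ℝ) (S η') v = B η' v := hSapp η' v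
  have h2 : inner (𝕜 := ℝ) ((InnerProductSpace.toDual ℝ (Euc n)).symm (B' η)) v = B' η v :=
    InnerProductSpace.toDual_symm_apply
  rw [← h1, hη', h2]

lemma exists_bounds (B : Euc n → Euc n →L[ℝ] Euc n →L[ℝ] ℝ)
    (hpd : ∀ y v, v ≠ 0 → 0 < B y v v)
    (X : Set (Euc n)) (x : Euc n) (hx : x ∈ X) (hg : ContinuousOn B X) :
    ∃ m M : ℝ, 0 < m ∧ 0 < M ∧ ∃ W ∈ 𝓝 x, ∀ y ∈ X ∩ W, ∀ v : Euc n,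
      m * ‖v‖^2 ≤ B y v v ∧ B y v v ≤ M * ‖v‖^2 := by
  obtain ⟨m, hm, hlow⟩ := exists_lower (B x) (hpd x)
  have hcw : ContinuousWithinAt B X x := hg x hx
  have hcw' : Tendsto B (𝓝[X] x) (𝓝 (B x)) := hcw
  have hev : ∀ᶠ y in 𝓝[X] x, dist (B y) (B x) < m/2 :=
    (Metric.tendsto_nhds.mp hcw') (m/2) (by linarith)
  rw [eventually_nhdsWithin_iff] at hev
  obtain ⟨W, hW, hWprop⟩ := eventually_iff_exists_mem.mp hev
  refine ⟨m/2, ‖B x‖ + m/2, by linarith, by positivity, W, hW, ?_⟩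
  rintro y ⟨hyX, hyW⟩ v
  have hd : ‖B y - B x‖ < m/2 := by
    have h2 := hWprop y hyW hyX
    rwa [show dist (B y) (B x) = ‖B y - B x‖ from by exact dist_eq_norm (B y) (B x)] at h2
  have hdiff : |B y v v - B x v v| ≤ m/2 * ‖v‖^2 := by
    have h1 : B y v v - B x v v = ((B y - B x) v) v := by simp
    rw [h1]
    calc |((B y - B x) v) v| ≤ ‖(B y - B x) v‖ * ‖v‖ := ((B y - B x) v).le_opNorm v
      _ ≤ (‖B y - B x‖ * ‖v‖) * ‖v‖ :=
        mul_le_mul_of_nonneg_right ((B y - B x).le_opNorm v) (norm_nonneg v)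
      _ ≤ (m/2 * ‖v‖) * ‖v‖ := by
        have := mul_le_mul_of_nonneg_right
          (mul_le_mul_of_nonneg_right hd.le (norm_nonneg v)) (norm_nonneg v)
        linarith
      _ = m/2 * ‖v‖^2 := by ring
  have hup : B x v v ≤ ‖B x‖ * ‖v‖^2 := by
    calc B x v v ≤ |B x v v| := le_abs_self _
      _ ≤ ‖B x v‖ * ‖v‖ := (B x v).le_opNorm v
      _ ≤ (‖B x‖ * ‖v‖) * ‖v‖ :=
        mul_le_mul_of_nonneg_right ((B x).le_opNorm v) (norm_nonneg v)
      _ = ‖B x‖ * ‖v‖^2 := by ring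
  have hlo := hlow v
  constructor
  · have := abs_le.mp hdiff
    linarith [this.1]
  · have := abs_le.mp hdiff
    linarith [this.2]

lemma sqrt_comp_bound {m M a b : ℝ} {v : Euc n} (hm : 0 < m) (hM : 0 < M)
    (h1 : a ≤ M * ‖v‖^2) (h2 : m * ‖v‖^2 ≤ b) :
    Real.sqrt a ≤ (Real.sqrt M / Real.sqrt m) * Real.sqrt b := by
  have hsm : 0 < Real.sqrt m := Real.sqrt_pos.mpr hm
  have eM : Real.sqrt (M * ‖v‖^2) = Real.sqrt M * ‖v‖ := by
    rw [Real.sqrt_mul hM.le, Real.sqrt_sq (norm_nonneg v)]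
  have em : Real.sqrt (m * ‖v‖^2) = Real.sqrt m * ‖v‖ := by
    rw [Real.sqrt_mul hm.le, Real.sqrt_sq (norm_nonneg v)]
  have e1 : Real.sqrt a ≤ Real.sqrt M * ‖v‖ := eM ▸ Real.sqrt_le_sqrt h1
  have e2 : Real.sqrt m * ‖v‖ ≤ Real.sqrt b := em ▸ Real.sqrt_le_sqrt h2
  have e3 : Real.sqrt M * ‖v‖ = (Real.sqrt M / Real.sqrt m) * (Real.sqrt m * ‖v‖) := by
    field_simp
  rw [e3] at e1
  calc Real.sqrt a ≤ (Real.sqrt M / Real.sqrt m) * (Real.sqrt m * ‖v‖) := e1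
    _ ≤ (Real.sqrt M / Real.sqrt m) * Real.sqrt b :=
      mul_le_mul_of_nonneg_left e2 (by positivity)

end ProxHelpers

/-- prox-regularity is independent of the (continuous) metric
(Proposition 7.5). -/
theorem stmt_12 {n : ℕ} (X : Set (Euc n)) (g g' : VarMetric n)
    (hX : ClarkeRegular X) (hg : ContinuousOn g.B X) (hg' : ContinuousOn g'.B X)
    (hprox : ProxReg X g) :
    ProxReg X g' := by
  intro x hx
  obtain ⟨L, hL, W, hW, hP⟩ := hprox x hx
  obtain ⟨m₁, M₁, hm₁, hM₁, W₁, hW₁, hb₁⟩ :=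
    exists_bounds g.B (fun y v hv => g.posdef y v hv) X x hx hg
  obtain ⟨m₂, M₂, hm₂, hM₂, W₂, hW₂, hb₂⟩ :=
    exists_bounds g'.B (fun y v hv => g'.posdef y v hv) X x hx hg'
  set C1 : ℝ := Real.sqrt M₂ / Real.sqrt m₁ with hC1def
  set C2 : ℝ := Real.sqrt M₁ / Real.sqrt m₂ with hC2def
  have hC1 : 0 < C1 := div_pos (Real.sqrt_pos.mpr hM₂) (Real.sqrt_pos.mpr hm₁)
  have hC2 : 0 < C2 := div_pos (Real.sqrt_pos.mpr hM₁) (Real.sqrt_pos.mpr hm₂)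
  refine ⟨L * C1 * C2^2, by positivity, W ∩ (W₁ ∩ W₂),
    inter_mem hW (inter_mem hW₁ hW₂), ?_⟩
  rintro y ⟨hyX, hyW, hyW₁, hyW₂⟩ z ⟨hzX, hzW, hzW₁, hzW₂⟩ η hη
  obtain ⟨η', hrep⟩ := exists_rep (g.B y) (g'.B y) (fun v hv => g.posdef y v hv) η
  have hη' : η' ∈ normalCone X g y := by
    intro v hv
    have : g.B y v η' = g'.B y v η := by
      rw [g.symm y v η', hrep v, g'.symm y η v]
    rw [this]
    exact hη v hv
  have key := hP y ⟨hyX, hyW⟩ z ⟨hzX, hzW⟩ η' hη'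
  -- norm comparisons
  have hzy₁ := hb₁ y ⟨hyX, hyW₁⟩ (z - y)
  have hzy₂ := hb₂ y ⟨hyX, hyW₂⟩ (z - y)
  have hB : g.gnorm y (z - y) ≤ C2 * g'.gnorm y (z - y) :=
    sqrt_comp_bound (v := z - y) hm₂ hM₁ hzy₁.2 hzy₂.1
  have hη₁ := hb₁ y ⟨hyX, hyW₁⟩ η'
  have hη₂ := hb₂ y ⟨hyX, hyW₂⟩ η'
  have hgnC : g'.gnorm y η' ≤ C1 * g.gnorm y η' :=
    sqrt_comp_bound (v := η') hm₁ hM₂ hη₂.2 hη₁.1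
  have hA : g.gnorm y η' ≤ C1 * g'.gnorm y η := by
    have e1 : g.B y η' η' = g'.B y η η' := hrep η'
    have cs : g'.B y η η' ≤ g'.gnorm y η * g'.gnorm y η' :=
      bilin_cs (g'.B y) (g'.symm y) (fun v hv => g'.posdef y v hv) η η'
    have hsq : g.gnorm y η' ^ 2 = g.B y η' η' :=
      Real.sq_sqrt (bilin_nonneg (g.B y) (fun v hv => g.posdef y v hv) η')
    have hnn1 : 0 ≤ g.gnorm y η' := Real.sqrt_nonneg _
    have hnn2 : 0 ≤ g'.gnorm y η := Real.sqrt_nonneg _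
    rcases eq_or_lt_of_le hnn1 with h0 | hpos
    · rw [← h0]; positivity
    · have chain : g.gnorm y η' ^ 2 ≤ g'.gnorm y η * (C1 * g.gnorm y η') := by
        calc g.gnorm y η' ^ 2 = g'.B y η η' := by rw [hsq, e1]
          _ ≤ g'.gnorm y η * g'.gnorm y η' := cs
          _ ≤ g'.gnorm y η * (C1 * g.gnorm y η') :=
            mul_le_mul_of_nonneg_left hgnC hnn2
      nlinarith [chain, hpos]
  have hgn2 : 0 ≤ g.gnorm y (z - y) := Real.sqrt_nonneg _
  have hgn3 : 0 ≤ g'.gnorm y η := Real.sqrt_nonneg _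
  have hgn4 : 0 ≤ g'.gnorm y (z - y) := Real.sqrt_nonneg _
  have hgn1 : 0 ≤ g.gnorm y η' := Real.sqrt_nonneg _
  have hB2 : g.gnorm y (z - y) ^ 2 ≤ C2^2 * g'.gnorm y (z - y) ^ 2 := by
    nlinarith [hB, hgn2, hgn4, hC2]
  calc g'.B y η (z - y) = g.B y η' (z - y) := (hrep (z - y)).symm
    _ ≤ L * g.gnorm y η' * g.gnorm y (z - y) ^ 2 := key
    _ ≤ L * ((C1 * g'.gnorm y η) * (C2^2 * g'.gnorm y (z - y)^2)) := by
      rw [mul_assoc]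
      exact mul_le_mul_of_nonneg_left
        (mul_le_mul hA hB2 (by positivity) (mul_nonneg hC1.le hgn3)) hL.le
    _ = L * C1 * C2 ^ 2 * g'.gnorm y η * g'.gnorm y (z - y) ^ 2 := by ring
end

section
/- Let X ⊆ ℝ^n be Clarke regular, let g be a locally Lipschitz metric on X, and let x ∈ X. Suppose X is prox-regular at x with respect to g, with constant L > 0 and neighborhood W of x. Then there exist L̄ > 0 and a neighborhood W' ⊆ W of x such that for all y ∈ X ∩ W' and all η ∈ N^g_y X with ‖η‖_{g(y)} = 1, one has ⟨η, x − y⟩_{g(x)} ≤ L̄ ‖y − x‖²_{g(x)}. -/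
open MeasureTheory Filter Topology Set
open scoped RealInnerProductSpace

variable {n : ℕ}

/-- The metric `g` is locally Lipschitz on `X`. -/
def LocLipMetric {n : ℕ} (X : Set (Euc n)) (g : VarMetric n) : Prop :=
  ∀ x ∈ X, ∃ K : NNReal, ∃ U ∈ 𝓝 x, LipschitzOnWith K g.B (X ∩ U)

lemma VarMetric.Bnn (g : VarMetric n) (y v : Euc n) : 0 ≤ g.B y v v := by
  rcases eq_or_ne v 0 with rfl | h
  · simp
  · exact (g.posdef y v h).le

lemma VarMetric.coercive (g : VarMetric n) (x : Euc n) :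
    ∃ m > (0:ℝ), ∀ v : Euc n, m * ‖v‖ ^ 2 ≤ g.B x v v := by
  rcases subsingleton_or_nontrivial (Euc n) with h | h
  · refine ⟨1, one_pos, fun v => ?_⟩
    have : v = 0 := Subsingleton.elim v 0
    simp [this]
  · have hcomp : IsCompact (Metric.sphere (0:Euc n) 1) := isCompact_sphere 0 1
    have hne : (Metric.sphere (0:Euc n) 1).Nonempty :=
      NormedSpace.sphere_nonempty.mpr zero_le_one
    have hcont : Continuous fun v : Euc n => g.B x v v :=
      (g.B x).continuous.clm_apply continuous_id
    obtain ⟨v0, hv0mem, hmin⟩ := hcomp.exists_isMinOn hne hcont.continuousOn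
    have hv0 : ‖v0‖ = 1 := mem_sphere_zero_iff_norm.mp hv0mem
    have hv0ne : v0 ≠ 0 := by
      intro h0
      rw [h0, norm_zero] at hv0
      norm_num at hv0
    refine ⟨g.B x v0 v0, g.posdef x v0 hv0ne, fun v => ?_⟩
    rcases eq_or_ne v 0 with rfl | hv
    · simp
    · have hvn : ‖v‖ ≠ 0 := norm_ne_zero_iff.mpr hv
      have hvp : 0 < ‖v‖ := lt_of_le_of_ne (norm_nonneg v) (Ne.symm hvn)
      have hu : ‖(‖v‖⁻¹ • v)‖ = 1 := by
        rw [norm_smul, norm_inv, norm_norm, inv_mul_cancel₀ hvn]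
      have hle : g.B x v0 v0 ≤ g.B x (‖v‖⁻¹ • v) (‖v‖⁻¹ • v) :=
        hmin (mem_sphere_zero_iff_norm.mpr hu)
      have hexp : g.B x (‖v‖⁻¹ • v) (‖v‖⁻¹ • v) = ‖v‖⁻¹ * ‖v‖⁻¹ * g.B x v v := by
        simp [_root_.map_smul, ContinuousLinearMap.smul_apply, smul_eq_mul]
        ring
      rw [hexp] at hle
      have h2 := mul_le_mul_of_nonneg_right hle (sq_nonneg ‖v‖)
      have h3 : ‖v‖⁻¹ * ‖v‖⁻¹ * g.B x v v * ‖v‖ ^ 2 = g.B x v v := by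
        have h4 : ‖v‖⁻¹ * ‖v‖⁻¹ * g.B x v v * ‖v‖ ^ 2
            = (‖v‖ * ‖v‖⁻¹) ^ 2 * g.B x v v := by ring
        rw [h4, mul_inv_cancel₀ hvn]
        ring
      rw [h3] at h2
      exact h2

set_option maxHeartbeats 1600000 in
/-- hypomonotonicity of proximal normals for a Lipschitz metric (Lemma 7.10). -/
theorem stmt_14 {n : ℕ} (X : Set (Euc n)) (g : VarMetric n)
    (hX : ClarkeRegular X) (hg : LocLipMetric X g)
    (x : Euc n) (hx : x ∈ X)
    (L : ℝ) (hL : 0 < L) (W : Set (Euc n)) (hW : W ∈ 𝓝 x)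
    (hprox : ∀ y ∈ X ∩ W, ∀ z ∈ X ∩ W, ∀ η ∈ normalCone X g y,
      g.B y η (z - y) ≤ L * g.gnorm y η * (g.gnorm y (z - y)) ^ 2) :
    ∃ Lb > (0:ℝ), ∃ W' ∈ 𝓝 x, W' ⊆ W ∧
      ∀ y ∈ X ∩ W', ∀ η ∈ normalCone X g y, g.gnorm y η = 1 →
        g.B x η (x - y) ≤ Lb * (g.gnorm x (y - x)) ^ 2 := by
  obtain ⟨m, hm, hcoer⟩ := g.coercive x
  obtain ⟨K, U, hU, hLip⟩ := hg x hx
  have hxU : x ∈ U := mem_of_mem_nhds hU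
  have hxW : x ∈ W := mem_of_mem_nhds hW
  obtain ⟨r₀, hr₀, hball⟩ := Metric.mem_nhds_iff.mp (inter_mem hW hU)
  set r : ℝ := min r₀ (m / (2 * ((K:ℝ) + 1))) with hr_def
  have hKpos : (0:ℝ) < (K:ℝ) + 1 := by positivity
  have hrpos : 0 < r := lt_min hr₀ (by positivity)
  have h2m : (0:ℝ) < 2 / m := div_pos two_pos hm
  set C : ℝ := (K:ℝ) * (1 + 2 / m) / m with hC_def
  have hC0 : 0 ≤ C := div_nonneg (mul_nonneg K.coe_nonneg (by linarith)) hm.le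
  set Lb : ℝ := (3/2) * L + C with hLb_def
  have hLbpos : 0 < Lb := by rw [hLb_def]; linarith
  refine ⟨Lb, hLbpos, Metric.ball x r, Metric.ball_mem_nhds x hrpos, ?_, ?_⟩
  · intro z hz
    exact (hball (Metric.ball_subset_ball (min_le_left _ _) hz)).1
  intro y hy η hη hη1
  obtain ⟨hyX, hyball⟩ := hy
  have hyWU : y ∈ W ∩ U := hball (Metric.ball_subset_ball (min_le_left _ _) hyball)
  -- distance bound
  set d : ℝ := ‖y - x‖ with hd_def
  have hd0 : 0 ≤ d := norm_nonneg _
  have hdr : d < r := by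
    have := Metric.mem_ball.mp hyball
    rwa [dist_eq_norm] at this
  have hKd : (K:ℝ) * d ≤ m / 2 := by
    have h1 : d ≤ m / (2 * ((K:ℝ) + 1)) := le_of_lt (lt_of_lt_of_le hdr (min_le_right _ _))
    have h2 : (K:ℝ) * d ≤ ((K:ℝ) + 1) * d := by nlinarith
    have h3 : ((K:ℝ) + 1) * d ≤ ((K:ℝ) + 1) * (m / (2 * ((K:ℝ) + 1))) :=
      mul_le_mul_of_nonneg_left h1 (by positivity)
    have h4 : ((K:ℝ) + 1) * (m / (2 * ((K:ℝ) + 1))) = m / 2 := by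
      field_simp
    linarith
  -- Lipschitz bound on the bilinear forms
  have hdist : ‖g.B y - g.B x‖ ≤ (K:ℝ) * d := by
    have h := hLip.dist_le_mul y ⟨hyX, hyWU.2⟩ x ⟨hx, hxU⟩
    simp only [dist_eq_norm] at h
    exact h
  have habs : ∀ a b : Euc n, |g.B y a b - g.B x a b| ≤ ((K:ℝ) * d) * ‖a‖ * ‖b‖ := by
    intro a b
    have h1 := (g.B y - g.B x).le_opNorm₂ a b
    have h2 : (g.B y - g.B x) a b = g.B y a b - g.B x a b := by simp
    rw [h2] at h1
    have h3 : ‖g.B y a b - g.B x a b‖ = |g.B y a b - g.B x a b| := rfl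
    rw [h3] at h1
    calc |g.B y a b - g.B x a b| ≤ ‖g.B y - g.B x‖ * ‖a‖ * ‖b‖ := h1
      _ ≤ ((K:ℝ) * d) * ‖a‖ * ‖b‖ := by
          have := mul_le_mul_of_nonneg_right (mul_le_mul_of_nonneg_right hdist (norm_nonneg a))
            (norm_nonneg b)
          linarith
  -- basic facts about η
  set e : ℝ := ‖η‖ with he_def
  have he0 : 0 ≤ e := norm_nonneg _
  have hByηη : g.B y η η = 1 := by
    have h := Real.sq_sqrt (g.Bnn y η)
    have h2 : Real.sqrt (g.B y η η) = 1 := by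
      rw [← hη1]; simp only [VarMetric.gnorm]
    rw [h2] at h
    rw [← h]; norm_num
  have hBxηη : m * e ^ 2 ≤ g.B x η η := hcoer η
  have hηd1 : g.B x η η ≤ 1 + ((K:ℝ) * d) * e * e := by
    have h := (abs_le.mp (habs η η)).1
    linarith [hByηη ▸ h]
  have hKdee : ((K:ℝ) * d) * e * e ≤ (m / 2) * e ^ 2 := by
    have h := mul_le_mul_of_nonneg_right hKd (mul_nonneg he0 he0)
    calc ((K:ℝ) * d) * e * e = ((K:ℝ) * d) * (e * e) := by ring
      _ ≤ (m / 2) * (e * e) := h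
      _ = (m / 2) * e ^ 2 := by ring
  have he2 : e ^ 2 ≤ 2 / m := by
    have h : m * e ^ 2 ≤ 1 + (m / 2) * e ^ 2 := by linarith
    rw [le_div_iff₀ hm]
    nlinarith
  have he1 : e ≤ 1 + 2 / m := by
    have h : e ≤ 1 + e ^ 2 := by nlinarith [sq_nonneg (e - 1)]
    linarith
  -- quantities
  set v : Euc n := x - y with hv_def
  have hvnorm : ‖v‖ = d := by rw [hv_def, hd_def, norm_sub_rev]
  set Q : ℝ := g.B x v v with hQ_def
  have hQ0 : 0 ≤ Q := g.Bnn x v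
  have hmdQ : m * d ^ 2 ≤ Q := by
    have h := hcoer v
    rwa [hvnorm] at h
  -- prox inequality
  have hproxy : g.B y η v ≤ L * g.B y v v := by
    have h := hprox y ⟨hyX, hyWU.1⟩ x ⟨hx, hxW⟩ η hη
    have hsq : (g.gnorm y (x - y)) ^ 2 = g.B y (x - y) (x - y) := by
      simp only [VarMetric.gnorm]
      exact Real.sq_sqrt (g.Bnn y (x - y))
    rw [hη1, hsq, mul_one] at h
    exact h
  -- compare B y v v with Q
  have hByvv : g.B y v v ≤ Q + (m / 2) * d ^ 2 := by
    have h := (abs_le.mp (habs v v)).2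
    rw [hvnorm] at h
    have hc : ((K:ℝ) * d) * d * d ≤ (m / 2) * d ^ 2 := by
      have h2 := mul_le_mul_of_nonneg_right hKd (mul_nonneg hd0 hd0)
      calc ((K:ℝ) * d) * d * d = ((K:ℝ) * d) * (d * d) := by ring
        _ ≤ (m / 2) * (d * d) := h2
        _ = (m / 2) * d ^ 2 := by ring
    linarith
  have hByvv' : g.B y v v ≤ (3/2) * Q := by linarith
  -- compare B x η v with B y η v
  have hBxηv : g.B x η v ≤ g.B y η v + ((K:ℝ) * d) * e * d := by
    have h := (abs_le.mp (habs η v)).1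
    rw [hvnorm] at h
    linarith
  -- bound the error term
  have hterm : ((K:ℝ) * d) * e * d ≤ C * Q := by
    have t2 : (K:ℝ) * e * d ^ 2 ≤ (K:ℝ) * (1 + 2 / m) * d ^ 2 := by
      have h := mul_le_mul_of_nonneg_right
        (mul_le_mul_of_nonneg_left he1 K.coe_nonneg) (sq_nonneg d)
      calc (K:ℝ) * e * d ^ 2 = ((K:ℝ) * e) * d ^ 2 := by ring
        _ ≤ ((K:ℝ) * (1 + 2 / m)) * d ^ 2 := h
    have t3 : (K:ℝ) * (1 + 2 / m) * d ^ 2 ≤ C * Q := by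
      have h := mul_le_mul_of_nonneg_left hmdQ hC0
      have t4 : C * (m * d ^ 2) = (K:ℝ) * (1 + 2 / m) * d ^ 2 := by
        rw [hC_def]
        field_simp
      linarith
    calc ((K:ℝ) * d) * e * d = (K:ℝ) * e * d ^ 2 := by ring
      _ ≤ (K:ℝ) * (1 + 2 / m) * d ^ 2 := t2
      _ ≤ C * Q := t3
  have hLBy : L * g.B y v v ≤ L * ((3/2) * Q) := mul_le_mul_of_nonneg_left hByvv' hL.le
  have hfinal : g.B x η v ≤ Lb * Q := by
    have hexp : Lb * Q = L * ((3/2) * Q) + C * Q := by rw [hLb_def]; ring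
    rw [hexp]
    linarith
  have hgoalQ : (g.gnorm x (y - x)) ^ 2 = Q := by
    have h1 : (g.gnorm x (y - x)) ^ 2 = g.B x (y - x) (y - x) := by
      simp only [VarMetric.gnorm]
      exact Real.sq_sqrt (g.Bnn x (y - x))
    have h2 : y - x = -v := by rw [hv_def]; abel
    rw [h1, h2]
    simp [hQ_def]
  rw [hgoalQ]
  exact hfinal
end

section
/- Let V, W ⊆ ℝ^n be open and let Φ : V → W be a C¹ diffeomorphism. Let X ⊆ ℝ^n be locally compact, X̃ := X ∩ V, let g be a locally weakly bounded metric on W, let Φ*g be the pullback metric on V defined by ⟨v, w⟩_{Φ*g(x)} := ⟨DΦ(x)(v), DΦ(x)(w)⟩_{g(Φ(x))}, and let f : X̃ → ℝ^n be a locally bounded vector field. Define the pushforward vector field f̂(y) := DΦ(Φ⁻¹(y))(f(Φ⁻¹(y))) on Φ(X̃). If x : [0,T) → X̃ is a Carathéodory (respectively, Krasovskii) solution of ẋ ∈ Π^{Φ*g}_{X̃} f(x), x(0) = x₀, then Φ∘x : [0,T) → Φ(X̃) is a Carathéodory (respectively, Krasovskii) solution of ẏ ∈ Π^g_{Φ(X̃)}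 f̂(y), y(0) = Φ(x₀). -/
open MeasureTheory Filter Topology Set
open scoped RealInnerProductSpace

variable {n : ℕ}

open Asymptotics in
lemma tan_push {n : ℕ} {S : Set (Euc n)} {x u : Euc n} {Ψ : Euc n → Euc n}
    {A : Euc n →L[ℝ] Euc n} (hΨ : HasFDerivAt Ψ A x) (hu : u ∈ tanCone S x) :
    A u ∈ tanCone (Ψ '' S) (Ψ x) := by
  obtain ⟨xk, δ, hmem, hxk, hδpos, hδ0, hlim⟩ := hu
  refine ⟨fun k => Ψ (xk k), δ, fun k => ⟨xk k, hmem k, rfl⟩,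
    (hΨ.continuousAt.tendsto).comp hxk, hδpos, hδ0, ?_⟩
  have hbigO : (fun k => xk k - x) =O[atTop] δ := by
    rw [isBigO_iff]
    refine ⟨‖u‖ + 1, ?_⟩
    filter_upwards [hlim.norm.eventually_lt_const (lt_add_one ‖u‖)] with k hk
    have h1 : xk k - x = δ k • ((δ k)⁻¹ • (xk k - x)) := (smul_inv_smul₀ (hδpos k).ne' _).symm
    rw [h1, norm_smul]
    rw [Real.norm_eq_abs]
    have := (hδpos k).le
    nlinarith [abs_nonneg (δ k), le_abs_self (δ k), norm_nonneg ((δ k)⁻¹ • (xk k - x))]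
  have hr : (fun k => Ψ (xk k) - Ψ x - A (xk k - x)) =o[atTop] δ :=
    (hΨ.isLittleO.comp_tendsto hxk).trans_isBigO hbigO
  have hz : Tendsto (fun k => (δ k)⁻¹ • (Ψ (xk k) - Ψ x - A (xk k - x))) atTop (𝓝 0) := by
    rw [NormedAddCommGroup.tendsto_nhds_zero]
    intro ε hε
    filter_upwards [hr.def (half_pos hε)] with k hk
    rw [norm_smul, Real.norm_eq_abs, abs_inv, abs_of_pos (hδpos k)]
    have hδk := hδpos k
    rw [Real.norm_eq_abs, abs_of_pos hδk] at hk
    calc (δ k)⁻¹ * ‖Ψ (xk k) - Ψ x - A (xk k - x)‖ ≤ (δ k)⁻¹ * (ε / 2 * δ k) := by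
          exact mul_le_mul_of_nonneg_left hk (by positivity)
      _ = ε / 2 := by field_simp
      _ < ε := half_lt_self hε
  have key : ∀ k, (δ k)⁻¹ • (Ψ (xk k) - Ψ x) =
      A ((δ k)⁻¹ • (xk k - x)) + (δ k)⁻¹ • (Ψ (xk k) - Ψ x - A (xk k - x)) := by
    intro k
    rw [A.map_smul, ← smul_add]
    congr 1
    abel
  simp only [key]
  have hA : Tendsto (fun k => A ((δ k)⁻¹ • (xk k - x))) atTop (𝓝 (A u)) :=
    (A.continuous.tendsto u).comp hlim
  simpa using hA.add hz
set_option maxHeartbeats 2000000 in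
lemma core_ftc {n : ℕ} {V : Set (Euc n)} (hV : IsOpen V) {Φ : Euc n → Euc n}
    (hΦ : ContDiffOn ℝ 1 Φ V) {x v : ℝ → Euc n} {t : ℝ}
    (ht : 0 ≤ t) (hxcont : ContinuousOn x (Icc 0 t))
    (hxV : ∀ s ∈ Icc 0 t, x s ∈ V)
    (hvint : IntegrableOn v (Icc 0 t))
    (hvhat : IntegrableOn (fun s => fderiv ℝ Φ (x s) (v s)) (Icc 0 t))
    (hprim : ∀ s ∈ Icc 0 t, x s = x 0 + ∫ r in (0:ℝ)..s, v r) :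
    Φ (x t) = Φ (x 0) + ∫ s in (0:ℝ)..t, fderiv ℝ Φ (x s) (v s) := by
  rcases eq_or_lt_of_le ht with rfl | htpos
  · simp
  set A := fderiv ℝ Φ with hA
  set vh : ℝ → Euc n := fun s => A (x s) (v s) with hvh
  have hAcont : ContinuousOn A V := hΦ.continuousOn_fderiv_of_isOpen hV le_rfl
  have hdiff : ∀ y ∈ V, HasFDerivAt Φ (A y) y := fun y hy =>
    (((hΦ.differentiableOn one_ne_zero) y hy).differentiableAt (hV.mem_nhds hy)).hasFDerivAt
  have hC : IsCompact (x '' Icc 0 t) := isCompact_Icc.image_of_continuousOn hxcont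
  set C := x '' Icc 0 t with hCdef
  have hCV : C ⊆ V := by rintro _ ⟨s, hs, rfl⟩; exact hxV s hs
  obtain ⟨r, hrpos, hrV⟩ := hC.exists_cthickening_subset_open hV hCV
  set K := Metric.cthickening r C with hKdef
  have hKcomp : IsCompact K := hC.cthickening
  have hCK : C ⊆ K := Metric.self_subset_cthickening _
  have hAK : UniformContinuousOn A K :=
    hKcomp.uniformContinuousOn_of_continuous (hAcont.mono hrV)
  -- reduce to ε-estimate
  suffices h : ∀ ε > 0, ‖Φ (x t) - (Φ (x 0) + ∫ s in (0:ℝ)..t, vh s)‖ ≤ ε by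
    have h0 : ‖Φ (x t) - (Φ (x 0) + ∫ s in (0:ℝ)..t, vh s)‖ ≤ 0 :=
      le_of_forall_pos_le_add (by intro ε hε; simpa using h ε hε)
    have := norm_le_zero_iff.mp h0
    exact sub_eq_zero.mp this
  intro ε hε
  set Iv := ∫ s in (0:ℝ)..t, ‖v s‖ with hIvdef
  have hIv0 : 0 ≤ Iv :=
    intervalIntegral.integral_nonneg ht fun u _ => norm_nonneg _
  set ε₁ := ε / (2 * (Iv + 1)) with hε₁def
  have hε₁ : 0 < ε₁ := by positivity
  obtain ⟨δ₁, hδ₁, hδ₁p⟩ := Metric.uniformContinuousOn_iff.mp hAK ε₁ hε₁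
  have hxu : UniformContinuousOn x (Icc 0 t) :=
    isCompact_Icc.uniformContinuousOn_of_continuous hxcont
  obtain ⟨δ₂, hδ₂, hδ₂p⟩ := Metric.uniformContinuousOn_iff.mp hxu (min δ₁ r)
    (lt_min hδ₁ hrpos)
  obtain ⟨N, hNgt⟩ := exists_nat_gt (t / δ₂)
  have hN0 : 0 < N := by
    by_contra hc
    push_neg at hc
    interval_cases N
    · simp at hNgt; nlinarith [div_pos htpos hδ₂]
  have hNR : (0:ℝ) < N := Nat.cast_pos.mpr hN0
  have hstep : 0 < t / N := div_pos htpos hNR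
  have hstepδ : t / N < δ₂ := by
    rw [div_lt_iff₀ hNR]
    rw [div_lt_iff₀ hδ₂] at hNgt
    linarith [mul_comm δ₂ (N:ℝ)]
  set p : ℕ → ℝ := fun i => i * (t / N) with hpdef
  have hp0 : p 0 = 0 := by simp [hpdef]
  have hpN : p N = t := by simp only [hpdef]; field_simp
  have hpmono : ∀ i, p i ≤ p (i + 1) := by
    intro i; simp only [hpdef]; push_cast; nlinarith [hstep.le]
  have hpIcc : ∀ i ≤ N, p i ∈ Icc 0 t := by
    intro i hi
    constructor
    · simp only [hpdef]; positivity
    · simp only [hpdef]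
      calc (i:ℝ) * (t / N) ≤ N * (t / N) := by
            apply mul_le_mul_of_nonneg_right _ hstep.le
            exact_mod_cast hi
        _ = t := by field_simp
  have hsubIcc : ∀ i < N, Icc (p i) (p (i + 1)) ⊆ Icc 0 t := fun i hi =>
    Icc_subset_Icc (hpIcc i hi.le).1 (hpIcc (i + 1) hi).2
  have hgap : ∀ i, p (i + 1) - p i = t / N := by
    intro i; simp only [hpdef]; push_cast; ring
  -- integrability on subintervals
  have hvii : ∀ i < N, IntervalIntegrable v volume (p i) (p (i + 1)) := by
    intro i hi
    rw [intervalIntegrable_iff_integrableOn_Icc_of_le (hpmono i)]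
    exact hvint.mono_set (hsubIcc i hi)
  have hvhii : ∀ i < N, IntervalIntegrable vh volume (p i) (p (i + 1)) := by
    intro i hi
    rw [intervalIntegrable_iff_integrableOn_Icc_of_le (hpmono i)]
    exact hvhat.mono_set (hsubIcc i hi)
  have hvnii : ∀ i < N, IntervalIntegrable (fun s => ‖v s‖) volume (p i) (p (i + 1)) :=
    fun i hi => (hvii i hi).norm
  -- the per-interval estimate
  have key : ∀ i < N,
      ‖Φ (x (p (i + 1))) - Φ (x (p i)) - ∫ s in p i..p (i + 1), vh s‖ ≤
        2 * ε₁ * ∫ s in p i..p (i + 1), ‖v s‖ := by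
    intro i hi
    set a := p i with hadef
    set b := p (i + 1) with hbdef
    have hab : a ≤ b := hpmono i
    have haI : a ∈ Icc 0 t := hpIcc i hi.le
    have hbI : b ∈ Icc 0 t := hpIcc (i + 1) hi
    have hsub : Icc a b ⊆ Icc 0 t := hsubIcc i hi
    have hba : b - a < δ₂ := by rw [hadef, hbdef, hgap i]; exact hstepδ
    have hd : x b - x a = ∫ s in a..b, v s := by
      have h0b : IntervalIntegrable v volume 0 b := by
        rw [intervalIntegrable_iff_integrableOn_Icc_of_le hbI.1]
        exact hvint.mono_set (Icc_subset_Icc le_rfl hbI.2)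
      have h0a : IntervalIntegrable v volume 0 a := by
        rw [intervalIntegrable_iff_integrableOn_Icc_of_le haI.1]
        exact hvint.mono_set (Icc_subset_Icc le_rfl haI.2)
      rw [hprim b hbI, hprim a haI]
      rw [show x 0 + (∫ r in (0:ℝ)..b, v r) - (x 0 + ∫ r in (0:ℝ)..a, v r) =
        (∫ r in (0:ℝ)..b, v r) - ∫ r in (0:ℝ)..a, v r by abel]
      exact intervalIntegral.integral_interval_sub_left h0b h0a
    set d := x b - x a with hddef
    have hdistab : ∀ s ∈ Icc a b, dist (x s) (x a) < min δ₁ r := by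
      intro s hs
      apply hδ₂p s (hsub hs) a (hsub (left_mem_Icc.mpr hab))
      rw [Real.dist_eq, abs_of_nonneg (by linarith [hs.1] : (0:ℝ) ≤ s - a)]
      linarith [hs.2]
    have hdn : ‖d‖ < min δ₁ r := by
      rw [hddef, ← dist_eq_norm]
      exact hdistab b (right_mem_Icc.mpr hab)
    set γ : ℝ → Euc n := fun lam => x a + lam • d with hγdef
    have hγK : ∀ lam ∈ Set.Icc (0:ℝ) 1, γ lam ∈ K := by
      intro lam hlam
      apply Metric.mem_cthickening_of_dist_le (γ lam) (x a) r C ⟨a, haI, rfl⟩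
      rw [hγdef]
      simp only [dist_eq_norm, add_sub_cancel_left]
      rw [norm_smul, Real.norm_eq_abs, abs_of_nonneg hlam.1]
      nlinarith [hdn, (lt_min_iff.mp hdn).2, norm_nonneg d, hlam.2]
    have hγδ₁ : ∀ lam ∈ Set.Icc (0:ℝ) 1, dist (γ lam) (x a) < δ₁ := by
      intro lam hlam
      rw [hγdef]
      simp only [dist_eq_norm, add_sub_cancel_left]
      rw [norm_smul, Real.norm_eq_abs, abs_of_nonneg hlam.1]
      calc lam * ‖d‖ ≤ 1 * ‖d‖ :=
            mul_le_mul_of_nonneg_right hlam.2 (norm_nonneg d)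
        _ = ‖d‖ := one_mul _
        _ < δ₁ := (lt_min_iff.mp hdn).1
    have hxaK : x a ∈ K := hCK ⟨a, haI, rfl⟩
    have hγcont : Continuous γ := by
      rw [hγdef]; exact continuous_const.add (continuous_id.smul continuous_const)
    have hAγcont : ContinuousOn (fun lam => A (γ lam) d) (Set.Icc (0:ℝ) 1) := by
      apply ContinuousOn.clm_apply _ continuousOn_const
      exact ((hAcont.mono hrV).comp hγcont.continuousOn) hγK
    have hseg : ∫ lam in (0:ℝ)..1, A (γ lam) d = Φ (x b) - Φ (x a) := by
      have := intervalIntegral.integral_eq_sub_of_hasDerivAt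
        (f := fun lam => Φ (γ lam)) (f' := fun lam => A (γ lam) d)
        (a := (0:ℝ)) (b := 1) ?_ ?_
      · rw [this]
        congr 1
        · rw [hγdef]; simp [hddef]
        · rw [hγdef]; simp
      · intro lam hlam
        rw [uIcc_of_le zero_le_one] at hlam
        have hγlam : HasDerivAt γ d lam := by
          rw [hγdef]
          simpa using ((hasDerivAt_id lam).smul_const d).const_add (x a)
        exact (hdiff (γ lam) (hrV (hγK lam hlam))).comp_hasDerivAt lam hγlam
      · apply ContinuousOn.intervalIntegrable
        rw [uIcc_of_le zero_le_one]
        exact hAγcont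
    have hvab : IntervalIntegrable v volume a b := hvii i hi
    have hvhab : IntervalIntegrable vh volume a b := hvhii i hi
    have hlinab : IntervalIntegrable (fun s => A (x a) (v s)) volume a b := by
      rw [intervalIntegrable_iff_integrableOn_Ioc_of_le hab] at hvab ⊢
      exact (A (x a)).integrable_comp hvab
    have hlin : A (x a) (∫ s in a..b, v s) = ∫ s in a..b, A (x a) (v s) :=
      ((A (x a)).intervalIntegral_comp_comm hvab).symm
    have hu01 : uIcc (0:ℝ) 1 = Set.Icc 0 1 := uIcc_of_le zero_le_one
    have hAint : IntervalIntegrable (fun lam => A (γ lam) d) volume 0 1 := by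
      apply ContinuousOn.intervalIntegrable
      rw [hu01]
      exact hAγcont
    have hconst : ∫ lam in (0:ℝ)..1, A (x a) d = A (x a) d := by simp
    have hsplit : Φ (x b) - Φ (x a) - ∫ s in a..b, vh s =
        (∫ lam in (0:ℝ)..1, (A (γ lam) d - A (x a) d)) +
        ∫ s in a..b, (A (x a) (v s) - vh s) := by
      rw [intervalIntegral.integral_sub hAint intervalIntegrable_const,
          intervalIntegral.integral_sub hlinab hvhab, hconst, hseg, ← hlin, ← hd]
      abel
    have hIvab0 : 0 ≤ ∫ s in a..b, ‖v s‖ :=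
      intervalIntegral.integral_nonneg hab fun u _ => norm_nonneg _
    have hdle : ‖d‖ ≤ ∫ s in a..b, ‖v s‖ := by
      rw [hd]
      exact intervalIntegral.norm_integral_le_integral_norm hab
    have e1 : ‖∫ lam in (0:ℝ)..1, (A (γ lam) d - A (x a) d)‖ ≤ ε₁ * ‖d‖ := by
      have hb1 : ∀ lam ∈ Set.uIoc (0:ℝ) 1, ‖A (γ lam) d - A (x a) d‖ ≤ ε₁ * ‖d‖ := by
        intro lam hlam
        rw [uIoc_of_le zero_le_one] at hlam
        have hmem : lam ∈ Set.Icc (0:ℝ) 1 := Ioc_subset_Icc_self hlam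
        have h1 : ‖A (γ lam) - A (x a)‖ ≤ ε₁ := le_of_lt (by
          rw [← dist_eq_norm]; exact hδ₁p _ (hγK lam hmem) _ hxaK (hγδ₁ lam hmem))
        calc ‖A (γ lam) d - A (x a) d‖ = ‖(A (γ lam) - A (x a)) d‖ := by
              simp [ContinuousLinearMap.sub_apply]
          _ ≤ ‖A (γ lam) - A (x a)‖ * ‖d‖ := (A (γ lam) - A (x a)).le_opNorm d
          _ ≤ ε₁ * ‖d‖ := mul_le_mul_of_nonneg_right h1 (norm_nonneg d)
      have := intervalIntegral.norm_integral_le_of_norm_le_const hb1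
      simpa using this
    have e2 : ‖∫ s in a..b, (A (x a) (v s) - vh s)‖ ≤ ε₁ * ∫ s in a..b, ‖v s‖ := by
      have hbd : ∀ s ∈ Set.Icc a b, ‖A (x a) (v s) - vh s‖ ≤ ε₁ * ‖v s‖ := by
        intro s hs
        have hxsK : x s ∈ K := hCK ⟨s, hsub hs, rfl⟩
        have h1 : ‖A (x a) - A (x s)‖ ≤ ε₁ := le_of_lt (by
          rw [← dist_eq_norm]
          exact hδ₁p _ hxaK _ hxsK (by
            rw [dist_comm]
            exact lt_of_lt_of_le (hdistab s hs) (min_le_left _ _)))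
        calc ‖A (x a) (v s) - vh s‖ = ‖(A (x a) - A (x s)) (v s)‖ := by
              simp [hvh, ContinuousLinearMap.sub_apply]
          _ ≤ ‖A (x a) - A (x s)‖ * ‖v s‖ := ContinuousLinearMap.le_opNorm _ _
          _ ≤ ε₁ * ‖v s‖ := mul_le_mul_of_nonneg_right h1 (norm_nonneg _)
      have hae : ∀ᵐ s ∂(volume.restrict (Set.uIoc a b)), ‖A (x a) (v s) - vh s‖ ≤ ε₁ * ‖v s‖ := by
        refine (ae_restrict_mem measurableSet_uIoc).mono fun s hs => ?_
        rw [uIoc_of_le hab] at hs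
        exact hbd s (Ioc_subset_Icc_self hs)
      have hgint : IntervalIntegrable (fun s => ε₁ * ‖v s‖) volume a b :=
        (hvnii i hi).const_mul ε₁
      have := intervalIntegral.norm_integral_le_of_norm_le hab
          ((ae_restrict_iff' measurableSet_Ioc).mp (by rwa [uIoc_of_le hab] at hae)) hgint
      calc ‖∫ s in a..b, (A (x a) (v s) - vh s)‖ ≤ |∫ s in a..b, ε₁ * ‖v s‖| := this.trans (le_abs_self _)
        _ = ∫ s in a..b, ε₁ * ‖v s‖ := abs_of_nonneg
            (intervalIntegral.integral_nonneg hab fun u _ => by positivity)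
        _ = ε₁ * ∫ s in a..b, ‖v s‖ := by rw [intervalIntegral.integral_const_mul]
    calc ‖Φ (x b) - Φ (x a) - ∫ s in a..b, vh s‖
        ≤ ε₁ * ‖d‖ + ε₁ * ∫ s in a..b, ‖v s‖ := by
          rw [hsplit]; exact (norm_add_le _ _).trans (add_le_add e1 e2)
      _ ≤ 2 * ε₁ * ∫ s in a..b, ‖v s‖ := by nlinarith
  -- assemble
  have hsum1 : ∑ i ∈ Finset.range N, (Φ (x (p (i + 1))) - Φ (x (p i))) =
      Φ (x t) - Φ (x 0) := by
    rw [Finset.sum_range_sub (fun i => Φ (x (p i)))]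
    rw [hpN, hp0]
  have hsum2 : ∑ i ∈ Finset.range N, ∫ s in p i..p (i + 1), vh s =
      ∫ s in (0:ℝ)..t, vh s := by
    rw [intervalIntegral.sum_integral_adjacent_intervals hvhii, hp0, hpN]
  have hsum3 : ∑ i ∈ Finset.range N, ∫ s in p i..p (i + 1), ‖v s‖ = Iv := by
    rw [intervalIntegral.sum_integral_adjacent_intervals hvnii, hp0, hpN]
  have hD : Φ (x t) - (Φ (x 0) + ∫ s in (0:ℝ)..t, vh s) =
      ∑ i ∈ Finset.range N,
        (Φ (x (p (i + 1))) - Φ (x (p i)) - ∫ s in p i..p (i + 1), vh s) := by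
    rw [Finset.sum_sub_distrib, hsum1, hsum2]; abel
  rw [hD]
  calc ‖∑ i ∈ Finset.range N,
        (Φ (x (p (i + 1))) - Φ (x (p i)) - ∫ s in p i..p (i + 1), vh s)‖
      ≤ ∑ i ∈ Finset.range N,
        ‖Φ (x (p (i + 1))) - Φ (x (p i)) - ∫ s in p i..p (i + 1), vh s‖ :=
        norm_sum_le _ _
    _ ≤ ∑ i ∈ Finset.range N, 2 * ε₁ * ∫ s in p i..p (i + 1), ‖v s‖ :=
        Finset.sum_le_sum fun i hi => key i (Finset.mem_range.mp hi)
    _ = 2 * ε₁ * Iv := by rw [← Finset.mul_sum, hsum3]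
    _ ≤ ε := by
        have h2 : ε₁ * (2 * (Iv + 1)) = ε := by rw [hε₁def]; field_simp
        nlinarith [hε₁]
lemma hasfd {n : ℕ} {V : Set (Euc n)} (hV : IsOpen V) {Φ : Euc n → Euc n}
    (hΦ : ContDiffOn ℝ 1 Φ V) {z : Euc n} (hz : z ∈ V) :
    HasFDerivAt Φ (fderiv ℝ Φ z) z :=
  (((hΦ.differentiableOn one_ne_zero) z hz).differentiableAt (hV.mem_nhds hz)).hasFDerivAt

lemma fderiv_comp_inv {n : ℕ} {V W : Set (Euc n)} (hV : IsOpen V) (hW : IsOpen W)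
    {Φ Φinv : Euc n → Euc n} (hΦ : ContDiffOn ℝ 1 Φ V) (hΦinv : ContDiffOn ℝ 1 Φinv W)
    (hmaps : Set.MapsTo Φ V W) (hleft : ∀ x ∈ V, Φinv (Φ x) = x)
    {z : Euc n} (hz : z ∈ V) :
    (fderiv ℝ Φinv (Φ z)).comp (fderiv ℝ Φ z) = ContinuousLinearMap.id ℝ (Euc n) := by
  have hdΦ := hasfd hV hΦ hz
  have hΦzW : Φ z ∈ W := hmaps hz
  have hdΦinv := hasfd hW hΦinv hΦzW
  have hcomp := hdΦinv.comp z hdΦ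
  have heq : (fun y => Φinv (Φ y)) =ᶠ[𝓝 z] id :=
    Filter.eventuallyEq_of_mem (hV.mem_nhds hz) fun y hy => hleft y hy
  exact (hcomp.congr_of_eventuallyEq heq.symm).unique (hasFDerivAt_id z)

section main
variable {n : ℕ} {V W : Set (Euc n)} (hV : IsOpen V) (hW : IsOpen W)
    {Φ Φinv : Euc n → Euc n}
    (hΦ : ContDiffOn ℝ 1 Φ V) (hΦinv : ContDiffOn ℝ 1 Φinv W)
    (hmaps : Set.MapsTo Φ V W) (hmaps' : Set.MapsTo Φinv W V)
    (hleft : ∀ x ∈ V, Φinv (Φ x) = x) (hright : ∀ y ∈ W, Φ (Φinv y) = y)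
    {X : Set (Euc n)} {g g' : VarMetric n}
    (hg' : ∀ x ∈ V, ∀ v w : Euc n,
      g'.B x v w = g.B (Φ x) (fderiv ℝ Φ x v) (fderiv ℝ Φ x w))
    {f fhat : Euc n → Euc n}
    (hfhat : ∀ y ∈ Φ '' (X ∩ V), fhat y = fderiv ℝ Φ (Φinv y) (f (Φinv y)))

include hV hW hΦ hΦinv hmaps hmaps' hleft hright hg' hfhat in
lemma proj_push : ∀ z ∈ X ∩ V, ∀ u ∈ projVF (X ∩ V) g' f z,
    fderiv ℝ Φ z u ∈ projVF (Φ '' (X ∩ V)) g fhat (Φ z) := by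
  intro z hz u hu
  have hzV : z ∈ V := hz.2
  have hdΦ := hasfd hV hΦ hzV
  have hfh : fhat (Φ z) = fderiv ℝ Φ z (f z) := by
    rw [hfhat (Φ z) ⟨z, hz, rfl⟩, hleft z hzV]
  have hnorm : ∀ w : Euc n,
      g.gnorm (Φ z) (fderiv ℝ Φ z w - fhat (Φ z)) = g'.gnorm z (w - f z) := by
    intro w
    rw [hfh, ← (fderiv ℝ Φ z).map_sub]
    unfold VarMetric.gnorm
    rw [hg' z hzV]
  constructor
  · exact tan_push hdΦ hu.1
  · intro w hw
    have himg : Φinv '' (Φ '' (X ∩ V)) = X ∩ V := by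
      ext y; constructor
      · rintro ⟨_, ⟨p, hp, rfl⟩, rfl⟩
        rw [hleft p hp.2]; exact hp
      · intro hy; exact ⟨Φ y, ⟨y, hy, rfl⟩, hleft y hy.2⟩
    have hΦzW : Φ z ∈ W := hmaps hzV
    have hdΦinv := hasfd hW hΦinv hΦzW
    have hw' : fderiv ℝ Φinv (Φ z) w ∈ tanCone (X ∩ V) z := by
      have := tan_push hdΦinv hw
      rwa [himg, hleft z hzV] at this
    have hrec : fderiv ℝ Φ z (fderiv ℝ Φinv (Φ z) w) = w := by
      have h2 := fderiv_comp_inv hW hV hΦinv hΦ hmaps' hright hΦzW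
      rw [hleft z hzV] at h2
      have := DFunLike.congr_fun h2 w
      simpa using this
    have hbound := hu.2 (fderiv ℝ Φinv (Φ z) w) hw'
    rw [hnorm u, ← hrec, hnorm _]
    exact hbound

include hV hW hΦ hΦinv hmaps hmaps' hleft hright hg' hfhat in
lemma kras_push : ∀ z ∈ X ∩ V, ∀ u ∈ kras (X ∩ V) (projVF (X ∩ V) g' f) z,
    fderiv ℝ Φ z u ∈ kras (Φ '' (X ∩ V)) (projVF (Φ '' (X ∩ V)) g fhat) (Φ z) := by
  intro z hz u hu
  have hzV : z ∈ V := hz.2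
  set A := fderiv ℝ Φ with hAdef
  have hAcont : ContinuousOn A V := hΦ.continuousOn_fderiv_of_isOpen hV le_rfl
  set S := {v : Euc n | ∃ (xk : ℕ → Euc n) (vk : ℕ → Euc n),
    (∀ k, xk k ∈ X ∩ V) ∧ Tendsto xk atTop (𝓝 z) ∧
    (∀ k, vk k ∈ projVF (X ∩ V) g' f (xk k)) ∧ Tendsto vk atTop (𝓝 v)} with hSdef
  set S' := {v : Euc n | ∃ (xk : ℕ → Euc n) (vk : ℕ → Euc n),
    (∀ k, xk k ∈ Φ '' (X ∩ V)) ∧ Tendsto xk atTop (𝓝 (Φ z)) ∧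
    (∀ k, vk k ∈ projVF (Φ '' (X ∩ V)) g fhat (xk k)) ∧ Tendsto vk atTop (𝓝 v)} with hS'def
  have hSS' : (A z) '' S ⊆ S' := by
    rintro _ ⟨v, ⟨xk, vk, h1, h2, h3, h4⟩, rfl⟩
    refine ⟨fun k => Φ (xk k), fun k => A (xk k) (vk k),
      fun k => ⟨xk k, h1 k, rfl⟩, ?_, ?_, ?_⟩
    · exact ((hasfd hV hΦ hzV).continuousAt.tendsto).comp h2
    · intro k
      exact proj_push hV hW hΦ hΦinv hmaps hmaps' hleft hright hg' hfhat
        (xk k) (h1 k) (vk k) (h3 k)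
    · have h5 : Tendsto (fun k => A (xk k)) atTop (𝓝 (A z)) :=
        ((hAcont.continuousAt (hV.mem_nhds hzV)).tendsto).comp h2
      have h6 : Tendsto (fun k => (A (xk k), vk k)) atTop (𝓝 (A z, v)) :=
        h5.prodMk_nhds h4
      exact (isBoundedBilinearMap_apply.continuous.tendsto (A z, v)).comp h6
  have h1 : A z u ∈ (A z) '' closure (convexHull ℝ S) := mem_image_of_mem _ hu
  have h2 : (A z) '' closure (convexHull ℝ S) ⊆ closure ((A z) '' convexHull ℝ S) :=
    image_closure_subset_closure_image (A z).continuous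
  have h3 : (A z) '' convexHull ℝ S = convexHull ℝ ((A z) '' S) :=
    (A z).toLinearMap.image_convexHull S
  have h4 : closure ((A z) '' convexHull ℝ S) ⊆
      closure (convexHull ℝ S') := by
    rw [h3]
    exact closure_mono (convexHull_mono hSS')
  exact h4 (h2 h1)

end main
set_option maxHeartbeats 1000000 in
lemma sol_push {n : ℕ} {V : Set (Euc n)} (hV : IsOpen V) {Φ : Euc n → Euc n}
    (hΦ : ContDiffOn ℝ 1 Φ V) {S : Set (Euc n)} (hSV : S ⊆ V)
    {F Fh : Euc n → Set (Euc n)}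
    (hP : ∀ z ∈ S, ∀ u ∈ F z, fderiv ℝ Φ z u ∈ Fh (Φ z))
    {x₀ : Euc n} {T : ℝ} {x : ℝ → Euc n}
    (hsol : IsSolOn S F x₀ x (Set.Ico 0 T)) :
    IsSolOn (Φ '' S) Fh (Φ x₀) (Φ ∘ x) (Set.Ico 0 T) := by
  obtain ⟨h0, hmem, v, hloc, hint, hae⟩ := hsol
  set A := fderiv ℝ Φ with hAdef
  set vh : ℝ → Euc n := fun s => A (x s) (v s) with hvhdef
  have hAcont : ContinuousOn A V := hΦ.continuousOn_fderiv_of_isOpen hV le_rfl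
  have hseg : ∀ t, 0 ≤ t → t < T → ContinuousOn x (Icc 0 t) ∧ IntegrableOn v (Icc 0 t) := by
    intro t ht0 htT
    have hsub : Icc 0 t ⊆ Ico 0 T := fun s hs => ⟨hs.1, lt_of_le_of_lt hs.2 htT⟩
    have hvI : IntegrableOn v (Icc 0 t) := hloc.integrableOn_compact_subset hsub isCompact_Icc
    refine ⟨?_, hvI⟩
    have hu : uIcc (0:ℝ) t = Icc 0 t := uIcc_of_le ht0
    have hvu : IntegrableOn v (uIcc 0 t) := by rwa [hu]
    have hc : ContinuousOn (fun s => x₀ + ∫ r in (0:ℝ)..s, v r) (Icc 0 t) := by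
      apply continuousOn_const.add
      have := intervalIntegral.continuousOn_primitive_interval hvu
      rwa [hu] at this
    exact hc.congr fun s hs => hint s (hsub hs)
  have hvhI : ∀ t, 0 ≤ t → t < T → IntegrableOn vh (Icc 0 t) := by
    intro t ht0 htT
    obtain ⟨hxc, hvI⟩ := hseg t ht0 htT
    have hsub : Icc 0 t ⊆ Ico 0 T := fun s hs => ⟨hs.1, lt_of_le_of_lt hs.2 htT⟩
    have hmapsV : Set.MapsTo x (Icc 0 t) V := fun s hs => hSV (hmem s (hsub hs))
    have hAx : ContinuousOn (fun s => A (x s)) (Icc 0 t) := hAcont.comp hxc hmapsV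
    obtain ⟨M, hM⟩ := isCompact_Icc.exists_bound_of_continuousOn hAx
    have hmeas : AEStronglyMeasurable vh (volume.restrict (Icc 0 t)) := by
      have h1 : AEStronglyMeasurable (fun s => A (x s)) (volume.restrict (Icc 0 t)) :=
        hAx.aestronglyMeasurable measurableSet_Icc
      have h2 := hvI.aestronglyMeasurable
      exact (isBoundedBilinearMap_apply.continuous).comp_aestronglyMeasurable (h1.prodMk h2)
    apply Integrable.mono' (hvI.norm.const_mul M) hmeas
    refine (ae_restrict_mem measurableSet_Icc).mono fun s hs => ?_
    calc ‖vh s‖ ≤ ‖A (x s)‖ * ‖v s‖ := (A (x s)).le_opNorm _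
      _ ≤ M * ‖v s‖ := mul_le_mul_of_nonneg_right (hM s hs) (norm_nonneg _)
  refine ⟨by simp [Function.comp, h0], fun t htI => ⟨x t, hmem t htI, rfl⟩, vh, ?_, ?_, ?_⟩
  · intro t htI
    obtain ⟨ht0, htT⟩ := htI
    have ht'0 : 0 ≤ (t + T) / 2 := by linarith
    have htt' : t < (t + T) / 2 := by linarith
    have ht'T : (t + T) / 2 < T := by linarith
    refine ⟨Icc 0 ((t + T) / 2), ?_, hvhI _ ht'0 ht'T⟩
    rw [mem_nhdsWithin]
    exact ⟨Iio ((t + T) / 2), isOpen_Iio, htt', fun s hs => ⟨hs.2.1, hs.1.le⟩⟩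
  · intro t htI
    obtain ⟨ht0, htT⟩ := htI
    obtain ⟨hxc, hvI⟩ := hseg t ht0 htT
    have hsub : Icc 0 t ⊆ Ico 0 T := fun s hs => ⟨hs.1, lt_of_le_of_lt hs.2 htT⟩
    have hprim : ∀ s ∈ Icc 0 t, x s = x 0 + ∫ r in (0:ℝ)..s, v r := by
      intro s hs
      rw [hint s (hsub hs), h0]
    have := core_ftc hV hΦ ht0 hxc (fun s hs => hSV (hmem s (hsub hs))) hvI
      (hvhI t ht0 htT) hprim
    rw [h0] at this
    simpa [Function.comp] using this
  · filter_upwards [hae, ae_restrict_mem measurableSet_Ico] with s hs hsI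
    exact hP (x s) (hmem s hsI) (v s) hs
/-- invariance of projected dynamical systems under C¹ coordinate
transformations with pullback metric (Proposition 8.3). -/
theorem stmt_18 {n : ℕ} (V W : Set (Euc n)) (hV : IsOpen V) (hW : IsOpen W)
    (Φ Φinv : Euc n → Euc n)
    (hΦ : ContDiffOn ℝ 1 Φ V) (hΦinv : ContDiffOn ℝ 1 Φinv W)
    (hmaps : Set.MapsTo Φ V W) (hmaps' : Set.MapsTo Φinv W V)
    (hleft : ∀ x ∈ V, Φinv (Φ x) = x) (hright : ∀ y ∈ W, Φ (Φinv y) = y)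
    (X : Set (Euc n)) (hX : LocCompactSet X)
    (g : VarMetric n)
    (hg : ∀ y ∈ W, ∃ l L : ℝ, 0 < l ∧ ∃ U ∈ 𝓝 y, ∀ z ∈ W ∩ U, l ≤ g.cond z ∧ g.cond z ≤ L)
    (g' : VarMetric n)
    (hg' : ∀ x ∈ V, ∀ v w : Euc n,
      g'.B x v w = g.B (Φ x) (fderiv ℝ Φ x v) (fderiv ℝ Φ x w))
    (f : Euc n → Euc n)
    (hf : ∀ x ∈ X ∩ V, ∃ M : ℝ, ∃ U ∈ 𝓝 x, ∀ y ∈ (X ∩ V) ∩ U, ‖f y‖ ≤ M)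
    (fhat : Euc n → Euc n)
    (hfhat : ∀ y ∈ Φ '' (X ∩ V), fhat y = fderiv ℝ Φ (Φinv y) (f (Φinv y)))
    (x₀ : Euc n) (hx₀ : x₀ ∈ X ∩ V) (T : ℝ) (hT : 0 < T) (x : ℝ → Euc n) :
    (IsSolOn (X ∩ V) (projVF (X ∩ V) g' f) x₀ x (Set.Ico 0 T) →
      IsSolOn (Φ '' (X ∩ V)) (projVF (Φ '' (X ∩ V)) g fhat) (Φ x₀) (Φ ∘ x)
        (Set.Ico 0 T)) ∧
    (IsSolOn (X ∩ V) (kras (X ∩ V) (projVF (X ∩ V) g' f)) x₀ x (Set.Ico 0 T) →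
      IsSolOn (Φ '' (X ∩ V)) (kras (Φ '' (X ∩ V)) (projVF (Φ '' (X ∩ V)) g fhat))
        (Φ x₀) (Φ ∘ x) (Set.Ico 0 T)) := by
  constructor
  · intro hsol
    exact sol_push hV hΦ inter_subset_right
      (proj_push hV hW hΦ hΦinv hmaps hmaps' hleft hright hg' hfhat) hsol
  · intro hsol
    exact sol_push hV hΦ inter_subset_right
      (kras_push hV hW hΦ hΦinv hmaps hmaps' hleft hright hg' hfhat) hsol
end
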